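/- arXiv:2505.05545 — 5 statements merged into one kernel-verified Lean document; each statement's English description precedes it below -/
import Mathlib

section
/- For positive integers n and m, the expression T_n(1-2t) + T_m(1+2t), where T_k denotes the k-th Chebyshev polynomial of the first kind, is a polynomial in t whose degree equals m when m > n, and equals 2*floor(m/2) when m = n. -/
/-!
By Taylor expansion at `1`, the coefficient of `t ^ k` in `f (1 + a t)` is `(Δₖ f)(1) aᵏ`, where `Δₖ`
is the `k`-th Hasse derivative. Hence the `t ^ k`-coefficient of `ρ` is
`(Δₖ Tₙ)(1) (-2)ᵏ + (Δₖ Tₘ)(1) 2ᵏ`. The value `(Δₖ Tⱼ)(1)` vanishes for `k > j` and is nonzero for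
`k ≤ j`, since `Tⱼ⁽ᵏ⁾(1) · ∏_{l<k} (2l+1) = ∏_{l<k} (j² - l²)`. For `m > n` the top coefficient of `ρ`
therefore sits at `t ^ m`; for `m = n` the `t ^ k`-coefficient is `(Δₖ Tₘ)(1) ((-2)ᵏ + 2ᵏ)`, which is
nonzero exactly for even `k ≤ m`.
-/

open Polynomial Polynomial.Chebyshev

namespace Polynomial

theorem coeff_comp_one_add_C_mul_X {R : Type*} [CommRing R] (f : R[X]) (a : R) (k : ℕ) :
    (f.comp (1 + C a * X)).coeff k = (hasseDeriv k f).eval 1 * a ^ k := by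
  have : f.comp (1 + C a * X) = (taylor 1 f).comp (C a * X) := by
    rw [taylor_apply, comp_assoc, add_comp, X_comp, C_comp, add_comm, C_1]
  rw [this, comp_C_mul_X_coeff, taylor_coeff]

namespace Chebyshev

section

variable {R : Type*} [CommRing R] [CharZero R]

theorem iterate_derivative_T_eval_one_ne_zero {n k : ℕ} (hk : k ≤ n) :
    (derivative^[k] (T R n)).eval 1 ≠ 0 := by
  have h := iterate_derivative_T_eval_one (R := R) n k
  refine right_ne_zero_of_mul (a := ((∏ l ∈ Finset.range k, (2 * l + 1) : ℕ) : R)) ?_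
  rw [h, Int.cast_ne_zero, Finset.prod_ne_zero_iff]
  intro l hl
  have : l < n := (Finset.mem_range.1 hl).trans_le hk
  rw [sub_ne_zero]
  exact_mod_cast (Nat.pow_lt_pow_left this two_ne_zero).ne'

theorem hasseDeriv_T_eval_one_ne_zero {n k : ℕ} (hk : k ≤ n) :
    (hasseDeriv k (T R n)).eval 1 ≠ 0 := by
  intro h
  apply iterate_derivative_T_eval_one_ne_zero (R := R) hk
  rw [← factorial_smul_hasseDeriv]
  simp [h]

end

theorem hasseDeriv_T_eq_zero {R : Type*} [CommRing R] [IsDomain R] [NeZero (2 : R)] {n k : ℕ}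
    (hk : n < k) : hasseDeriv k (T R n) = 0 :=
  hasseDeriv_eq_zero_of_lt_natDegree _ _ (by simpa using hk)

end Chebyshev

end Polynomial

theorem stmt_0_general (n m : ℕ)
    (ρ : Polynomial ℝ)
    (hρ : ρ = (Polynomial.Chebyshev.T ℝ n).comp (1 - 2 * Polynomial.X)
        + (Polynomial.Chebyshev.T ℝ m).comp (1 + 2 * Polynomial.X)) :
    (m > n → ρ.natDegree = m) ∧ (m = n → ρ.natDegree = 2 * (m / 2)) := by
  have hρ_coeff (k : ℕ) : ρ.coeff k =
      (hasseDeriv k (T ℝ n)).eval 1 * (-2) ^ k + (hasseDeriv k (T ℝ m)).eval 1 * 2 ^ k := by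
    have h_neg : (1 - 2 * X : ℝ[X]) = 1 + Polynomial.C (-2) * X := by
      rw [map_neg, map_ofNat]; ring
    have h_pos : (1 + 2 * X : ℝ[X]) = 1 + Polynomial.C 2 * X := by rw [map_ofNat]
    rw [hρ, coeff_add, h_neg, h_pos, coeff_comp_one_add_C_mul_X, coeff_comp_one_add_C_mul_X]
  refine ⟨fun hnm ↦ ?_, fun hmn ↦ ?_⟩
  · refine natDegree_eq_of_le_of_coeff_ne_zero (natDegree_le_iff_coeff_eq_zero.2 fun k hk ↦ ?_) ?_
    · simp [hρ_coeff, hasseDeriv_T_eq_zero hk, hasseDeriv_T_eq_zero (hnm.trans hk)]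
    · simp [hρ_coeff, hasseDeriv_T_eq_zero hnm, hasseDeriv_T_eval_one_ne_zero le_rfl]
  · subst hmn
    have hρ_coeff' (k : ℕ) : ρ.coeff k = (hasseDeriv k (T ℝ m)).eval 1 * ((-2) ^ k + 2 ^ k) := by
      rw [hρ_coeff, mul_add]
    refine natDegree_eq_of_le_of_coeff_ne_zero (natDegree_le_iff_coeff_eq_zero.2 fun k hk ↦ ?_) ?_
    · rcases lt_or_ge m k with hmk | hkm
      · simp [hρ_coeff', hasseDeriv_T_eq_zero hmk]
      · have hodd : Odd k := by rw [Nat.odd_iff]; omega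
        simp [hρ_coeff', hodd.neg_pow]
    · rw [hρ_coeff', (even_two_mul _).neg_pow]
      exact mul_ne_zero (hasseDeriv_T_eval_one_ne_zero (Nat.mul_div_le m 2)) (by positivity)

/-- The degree of `T_n(1-2t) + T_m(1+2t)` is `m` when `m > n`,
and `2⌊m/2⌋` when `m = n`. -/
theorem stmt_0 (n m : ℕ) (hn : 0 < n) (hm : 0 < m)
    (ρ : Polynomial ℝ)
    (hρ : ρ = (Polynomial.Chebyshev.T ℝ n).comp (1 - 2 * Polynomial.X)
        + (Polynomial.Chebyshev.T ℝ m).comp (1 + 2 * Polynomial.X)) :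
    (m > n → ρ.natDegree = m) ∧ (m = n → ρ.natDegree = 2 * (m / 2)) :=
  stmt_0_general n m ρ hρ
end

section
/- If μ is a positive measure on ℝ with infinite support, p_{k-1} and p_k are its orthonormal polynomials, and x_1, ..., x_k are the roots of p_k, then the rational function p_{k-1}(z)/p_k(z) admits a partial fraction decomposition Σ_{s=1}^{k} d_s/(z - x_s) with all d_s > 0, and consequently z ↦ φ(z) - p_{k-1}(z)/p_k(z) maps the open upper half-plane into itself whenever φ does. -/
/-!
Write `p_k = c ∏ₛ (X - xₛ)` with `c > 0`. A polynomial of degree `< 2k` vanishing at every node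
is `p_k` times a polynomial of degree `< k`, so its integral vanishes by orthogonality (Gauss
quadrature). For `ℓₛ = ∏_{t ≠ s} (X - x_t)` this gives `∫ ℓₛ² = ℓₛ(xₛ) ∫ ℓₛ > 0` and
`1 / lc(p_{k-1}) = ∫ p_{k-1} ℓₛ = p_{k-1}(xₛ) ∫ ℓₛ`, so `p_{k-1}(xₛ)` and `ℓₛ(xₛ)` have the same
sign. Lagrange interpolation of `p_{k-1}` at the nodes yields `p_{k-1}/p_k = ∑ dₛ / (z - xₛ)` with
`dₛ = p_{k-1}(xₛ) / (c ℓₛ(xₛ)) > 0`, and `Im (d / (w - x)) < 0` for `d > 0`, `x` real, `Im w > 0`.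
-/

open MeasureTheory Polynomial

open Finset Lagrange

namespace Lagrange

variable {F ι : Type*} [Field F] {s : Finset ι} {v : ι → F}

theorem nodal_dvd_of_eval_eq_zero (hvs : Set.InjOn v s) {f : F[X]}
    (hf : ∀ i ∈ s, f.eval (v i) = 0) : nodal s v ∣ f :=
  prod_dvd_of_coprime
    (fun _ hi _ hj hij =>
      isCoprime_X_sub_C_of_isUnit_sub (sub_ne_zero_of_ne (hvs.ne hi hj hij)).isUnit)
    fun i hi => dvd_iff_isRoot.mpr (hf i hi)

theorem eq_C_leadingCoeff_mul_nodal (hvs : Set.InjOn v s) {f : F[X]} (hdeg : f.degree = #s)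
    (hf : ∀ i ∈ s, f.eval (v i) = 0) : f = C f.leadingCoeff * nodal s v := by
  have hf0 : f ≠ 0 := by rintro rfl; simp at hdeg
  refine eq_of_degree_le_of_eval_index_eq s hvs hdeg.le ?_ ?_ fun i hi => ?_
  · rw [degree_C_mul (leadingCoeff_ne_zero.mpr hf0), degree_nodal, hdeg]
  · rw [leadingCoeff_mul, leadingCoeff_C, nodal_monic.leadingCoeff, mul_one]
  · rw [eval_mul, eval_nodal_at_node hi, mul_zero, hf i hi]

theorem eval_div_eval_nodal [DecidableEq ι] (hvs : Set.InjOn v s) {q : F[X]} (hq : q.degree < #s)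
    {z : F} (hz : ∀ i ∈ s, z ≠ v i) :
    q.eval z / (nodal s v).eval z = ∑ i ∈ s, nodalWeight s v i * q.eval (v i) / (z - v i) := by
  conv_lhs => rw [eq_interpolate hvs hq, eval_interpolate_not_at_node _ hz,
    mul_div_cancel_left₀ _ (eval_nodal_not_at_node hz)]
  exact sum_congr rfl fun i _ => by ring

end Lagrange

section OrthogonalPolynomials

variable {μ : Measure ℝ} {P : ℕ → ℝ[X]}

theorem integrable_eval (hmom : ∀ j : ℕ, Integrable (fun x => x ^ j) μ) (q : ℝ[X]) :
    Integrable (fun x => q.eval x) μ := by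
  simp_rw [eval_eq_sum_range]
  exact integrable_finsetSum _ fun i _ => (hmom i).const_mul _

theorem integrable_eval_mul (hmom : ∀ j : ℕ, Integrable (fun x => x ^ j) μ) (p q : ℝ[X]) :
    Integrable (fun x => p.eval x * q.eval x) μ := by
  simpa only [eval_mul] using integrable_eval hmom (p * q)

theorem integral_eval_mul_eq_zero_of_degree_lt (hmom : ∀ j : ℕ, Integrable (fun x => x ^ j) μ)
    (hdeg : ∀ i, (P i).degree = i)
    (horth : ∀ i j, ∫ x, (P i).eval x * (P j).eval x ∂μ = if i = j then 1 else 0)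
    {n : ℕ} {q : ℝ[X]} (hq : q.degree < n) : ∫ x, (P n).eval x * q.eval x ∂μ = 0 := by
  let S : Sequence ℝ := ⟨P, hdeg⟩
  have hspan : q ∈ Submodule.span ℝ (P '' Set.Iio n) := by
    rw [S.span_degreeLT fun i _ => (leadingCoeff_ne_zero.mpr (S.ne_zero i)).isUnit]
    exact mem_degreeLT.mpr hq
  clear hq
  induction hspan using Submodule.span_induction with
  | mem p hp =>
    obtain ⟨i, hi, rfl⟩ := hp
    rw [horth, if_neg (Set.mem_Iio.mp hi).ne']
  | zero => simp
  | add p r _ _ hp hr =>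
    simp only [eval_add, mul_add]
    rw [integral_add (integrable_eval_mul hmom _ _) (integrable_eval_mul hmom _ _), hp, hr,
      add_zero]
  | smul a p _ hp =>
    simp only [eval_smul, smul_eq_mul, mul_left_comm _ a]
    rw [integral_const_mul, hp, mul_zero]

theorem integral_eval_mul_eq_coeff_div_leadingCoeff
    (hmom : ∀ j : ℕ, Integrable (fun x => x ^ j) μ) (hdeg : ∀ i, (P i).degree = i)
    (horth : ∀ i j, ∫ x, (P i).eval x * (P j).eval x ∂μ = if i = j then 1 else 0)
    {n : ℕ} {q : ℝ[X]} (hq : q.degree ≤ n) :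
    ∫ x, (P n).eval x * q.eval x ∂μ = q.coeff n / (P n).leadingCoeff := by
  set a := q.coeff n / (P n).leadingCoeff
  have hlc : (P n).leadingCoeff ≠ 0 :=
    leadingCoeff_ne_zero.mpr (ne_zero_of_coe_le_degree (hdeg n).ge)
  have hcoeff : (P n).coeff n = (P n).leadingCoeff := by
    rw [leadingCoeff, natDegree_eq_of_degree_eq_some (hdeg n)]
  have hrem : (q - C a * P n).degree < n := by
    rw [degree_lt_iff_coeff_zero]
    intro m hm
    rcases hm.lt_or_eq with hm | rfl
    · rw [coeff_sub, coeff_C_mul, coeff_eq_zero_of_degree_lt (hq.trans_lt (by exact_mod_cast hm)),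
        coeff_eq_zero_of_degree_lt (by rw [hdeg]; exact_mod_cast hm), mul_zero, sub_zero]
    · rw [coeff_sub, coeff_C_mul, hcoeff, div_mul_cancel₀ _ hlc, sub_self]
  have hrem_orth := integral_eval_mul_eq_zero_of_degree_lt hmom hdeg horth hrem
  simp only [eval_sub, eval_mul, eval_C, mul_sub] at hrem_orth
  rw [integral_sub (integrable_eval_mul hmom _ _)
    (by simpa only [mul_left_comm] using (integrable_eval_mul hmom (P n) (P n)).const_mul a),
    sub_eq_zero] at hrem_orth
  rw [hrem_orth]
  simp_rw [mul_left_comm _ a]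
  rw [integral_const_mul, horth, if_pos rfl, mul_one]

theorem integral_eval_eq_zero_of_dvd (hmom : ∀ j : ℕ, Integrable (fun x => x ^ j) μ)
    (hdeg : ∀ i, (P i).degree = i)
    (horth : ∀ i j, ∫ x, (P i).eval x * (P j).eval x ∂μ = if i = j then 1 else 0)
    {n : ℕ} {f : ℝ[X]} (hdvd : P n ∣ f) (hf : f.degree < ↑(2 * n)) :
    ∫ x, f.eval x ∂μ = 0 := by
  obtain ⟨h, rfl⟩ := hdvd
  rcases eq_or_ne h 0 with rfl | h0
  · simp
  have hh : h.degree < n := by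
    rw [degree_mul, hdeg, degree_eq_natDegree h0] at hf
    rw [degree_eq_natDegree h0]
    norm_cast at hf ⊢
    omega
  simp only [eval_mul]
  exact integral_eval_mul_eq_zero_of_degree_lt hmom hdeg horth hh

theorem integral_eval_mul_self_pos (hsupp : ∀ s : Finset ℝ, μ ((↑s : Set ℝ)ᶜ) ≠ 0)
    (hmom : ∀ j : ℕ, Integrable (fun x => x ^ j) μ) {q : ℝ[X]} (hq : q ≠ 0) :
    0 < ∫ x, q.eval x * q.eval x ∂μ := by
  rw [integral_pos_iff_support_of_nonneg (fun x => mul_self_nonneg _)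
    (integrable_eval_mul hmom q q)]
  refine (pos_iff_ne_zero.mpr (hsupp q.roots.toFinset)).trans_le (measure_mono fun x hx => ?_)
  simpa [hq] using hx

end OrthogonalPolynomials

section GaussNodes

variable {μ : Measure ℝ} {P : ℕ → ℝ[X]} {n : ℕ}

theorem integral_eval_eq_of_eval_roots_eq (hmom : ∀ j : ℕ, Integrable (fun x => x ^ j) μ)
    (hdeg : ∀ i, (P i).degree = i)
    (horth : ∀ i j, ∫ x, (P i).eval x * (P j).eval x ∂μ = if i = j then 1 else 0)
    {x : Fin n → ℝ} (hxinj : Function.Injective x) (hroot : ∀ s, (P n).eval (x s) = 0)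
    {f g : ℝ[X]} (hf : f.degree < ↑(2 * n)) (hg : g.degree < ↑(2 * n))
    (hfg : ∀ s, f.eval (x s) = g.eval (x s)) :
    ∫ t, f.eval t ∂μ = ∫ t, g.eval t ∂μ := by
  have hPn : P n = C (P n).leadingCoeff * nodal univ x :=
    eq_C_leadingCoeff_mul_nodal hxinj.injOn (by simp [hdeg]) fun s _ => hroot s
  have hlc : IsUnit (C (P n).leadingCoeff) :=
    isUnit_C.mpr (leadingCoeff_ne_zero.mpr (ne_zero_of_coe_le_degree (hdeg n).ge)).isUnit
  have hdvd : P n ∣ f - g := by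
    rw [hPn, hlc.mul_left_dvd]
    exact nodal_dvd_of_eval_eq_zero hxinj.injOn fun s _ => by rw [eval_sub, hfg, sub_self]
  have hzero := integral_eval_eq_zero_of_dvd hmom hdeg horth hdvd
    ((degree_sub_le f g).trans_lt (max_lt hf hg))
  simp only [eval_sub] at hzero
  rwa [integral_sub (integrable_eval hmom f) (integrable_eval hmom g), sub_eq_zero] at hzero

theorem integral_eval_mul_nodal_erase (hmom : ∀ j : ℕ, Integrable (fun x => x ^ j) μ)
    (hdeg : ∀ i, (P i).degree = i)
    (horth : ∀ i j, ∫ x, (P i).eval x * (P j).eval x ∂μ = if i = j then 1 else 0)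
    {x : Fin (n + 1) → ℝ} (hxinj : Function.Injective x)
    (hroot : ∀ s, (P (n + 1)).eval (x s) = 0) (s : Fin (n + 1)) (p : ℝ[X]) (hp : p.degree ≤ n) :
    ∫ t, p.eval t * (nodal (univ.erase s) x).eval t ∂μ
      = p.eval (x s) * ∫ t, (nodal (univ.erase s) x).eval t ∂μ := by
  set E := nodal (univ.erase s) x
  have hdeg_mul : ∀ q : ℝ[X], q.degree ≤ n → (q * E).degree < ↑(2 * (n + 1)) := fun q hq => by
    grw [degree_mul_le, hq, show E.degree = n by simp [E, degree_nodal]]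
    norm_cast
    omega
  have hnode : ∀ t, (p * E).eval (x t) = (C (p.eval (x s)) * E).eval (x t) := fun t => by
    rcases eq_or_ne t s with rfl | ht
    · simp
    · simp [E, eval_nodal_at_node (mem_erase.mpr ⟨ht, mem_univ t⟩)]
  simpa [integral_const_mul] using integral_eval_eq_of_eval_roots_eq hmom hdeg horth hxinj hroot
    (hdeg_mul p hp) (hdeg_mul _ (degree_C_le.trans (by positivity))) hnode

theorem eval_mul_nodalWeight_pos (hsupp : ∀ s : Finset ℝ, μ ((↑s : Set ℝ)ᶜ) ≠ 0)
    (hmom : ∀ j : ℕ, Integrable (fun x => x ^ j) μ) (hdeg : ∀ i, (P i).degree = i)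
    (horth : ∀ i j, ∫ x, (P i).eval x * (P j).eval x ∂μ = if i = j then 1 else 0)
    (hlead : 0 < (P n).leadingCoeff) {x : Fin (n + 1) → ℝ} (hxinj : Function.Injective x)
    (hroot : ∀ s, (P (n + 1)).eval (x s) = 0) (s : Fin (n + 1)) :
    0 < (P n).eval (x s) * nodalWeight univ x s := by
  set E := nodal (univ.erase s) x
  set L := ∫ t, E.eval t ∂μ
  have hEdeg : E.degree = n := by simp [E, degree_nodal]
  have hquad := integral_eval_mul_nodal_erase hmom hdeg horth hxinj hroot s
  have hWL : 0 < E.eval (x s) * L :=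
    hquad E hEdeg.le ▸ integral_eval_mul_self_pos hsupp hmom nodal_ne_zero
  have hvL : 0 < (P n).eval (x s) * L := by
    rw [← hquad (P n) (hdeg n).le,
      integral_eval_mul_eq_coeff_div_leadingCoeff hmom hdeg horth hEdeg.le]
    have hEcoeff : E.coeff n = 1 := by
      simpa [E, natDegree_nodal] using (nodal_monic (s := univ.erase s) (v := x)).coeff_natDegree
    rw [hEcoeff]
    exact one_div_pos.mpr hlead
  have hL : L ≠ 0 := by rintro h; simp [h] at hWL
  rw [nodalWeight_eq_eval_nodal_erase_inv, ← div_eq_mul_inv, ← mul_div_mul_right _ _ hL]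
  exact div_pos hvL hWL

end GaussNodes

section PartialFractions

variable {ι : Type*}

theorem aeval_C_mul_nodal (c : ℝ) (s : Finset ι) (x : ι → ℝ) (z : ℂ) :
    aeval z (C c * nodal s x) = c * ∏ i ∈ s, (z - x i) := by
  simp [nodal_eq, map_prod]

theorem nodalWeight_ofReal [DecidableEq ι] (s : Finset ι) (x : ι → ℝ) (i : ι) :
    nodalWeight s (fun j => (x j : ℂ)) i = nodalWeight s x i := by
  simp [nodalWeight]

theorem aeval_div_aeval_C_mul_nodal [Fintype ι] [DecidableEq ι] {x : ι → ℝ}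
    (hx : Function.Injective x) (c : ℝ) {q : ℝ[X]} (hq : q.degree < Fintype.card ι) {z : ℂ}
    (hz : aeval z (C c * nodal univ x) ≠ 0) :
    aeval z q / aeval z (C c * nodal univ x)
      = ∑ i, ((q.eval (x i) * nodalWeight univ x i / c : ℝ) : ℂ) / (z - x i) := by
  rw [aeval_C_mul_nodal] at hz ⊢
  have hnode : ∀ i ∈ univ, z ≠ x i := fun i hi h =>
    hz (mul_eq_zero_of_right _ (prod_eq_zero hi (by rw [h, sub_self])))
  have := eval_div_eval_nodal (v := fun i => (x i : ℂ)) (Complex.ofReal_injective.comp hx).injOn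
    (q := q.map (algebraMap ℝ ℂ)) (by rwa [degree_map, card_univ]) hnode
  rw [eval_map_algebraMap, eval_nodal] at this
  rw [mul_comm, ← div_div, this, sum_div]
  refine sum_congr rfl fun i _ => ?_
  have hqx : aeval (x i : ℂ) q = q.eval (x i) := by
    simpa using aeval_algebraMap_apply_eq_algebraMap_eval (A := ℂ) (x i) q
  rw [eval_map_algebraMap, nodalWeight_ofReal, hqx]
  push_cast
  ring

end PartialFractions

section UpperHalfPlane

variable {ι : Type*}

theorem aeval_C_mul_nodal_ne_zero_of_im_ne_zero {c : ℝ} (hc : c ≠ 0) (s : Finset ι) (x : ι → ℝ)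
    {w : ℂ} (hw : w.im ≠ 0) : aeval w (C c * nodal s x) ≠ 0 := by
  rw [aeval_C_mul_nodal]
  refine mul_ne_zero (Complex.ofReal_ne_zero.mpr hc) (prod_ne_zero_iff.mpr fun i _ h => hw ?_)
  simpa using congrArg Complex.im h

theorem im_sum_ofReal_div_sub_ofReal_nonpos (s : Finset ι) (x : ι → ℝ) {d : ι → ℝ}
    (hd : ∀ i ∈ s, 0 ≤ d i) {w : ℂ} (hw : 0 ≤ w.im) :
    (∑ i ∈ s, (d i : ℂ) / (w - x i)).im ≤ 0 := by
  rw [Complex.im_sum]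
  refine sum_nonpos fun i hi => ?_
  rw [div_eq_mul_inv, Complex.im_ofReal_mul, Complex.inv_im, Complex.sub_im, Complex.ofReal_im,
    sub_zero]
  exact mul_nonpos_of_nonneg_of_nonpos (hd i hi)
    (div_nonpos_of_nonpos_of_nonneg (neg_nonpos.mpr hw) (Complex.normSq_nonneg _))

end UpperHalfPlane

/-- For orthonormal polynomials of a measure with infinite support, `p_{k-1}/p_k`
has a partial fraction decomposition `Σ d_s/(z - x_s)` with all `d_s > 0` over the
roots `x_s` of `p_k`; consequently `φ - p_{k-1}/p_k` maps the open upper half-plane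
into itself whenever `φ` does. -/
theorem stmt_13 (μ : Measure ℝ)
    (hsupp : ∀ s : Finset ℝ, μ ((↑s : Set ℝ)ᶜ) ≠ 0)
    (hmom : ∀ j : ℕ, Integrable (fun x => x ^ j) μ)
    (P : ℕ → Polynomial ℝ)
    (hdeg : ∀ i, (P i).natDegree = i)
    (hlead : ∀ i, 0 < (P i).leadingCoeff)
    (horth : ∀ i j, ∫ x, (P i).eval x * (P j).eval x ∂μ = if i = j then 1 else 0)
    (k : ℕ) (hk : 1 ≤ k)
    (x : Fin k → ℝ) (hxinj : Function.Injective x)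
    (hroot : ∀ s, (P k).eval (x s) = 0) :
    ∃ d : Fin k → ℝ, (∀ s, 0 < d s) ∧
      (∀ z : ℂ, Polynomial.aeval z (P k) ≠ 0 →
        Polynomial.aeval z (P (k - 1)) / Polynomial.aeval z (P k)
          = ∑ s, ((d s : ℂ) / (z - (x s : ℂ)))) ∧
      (∀ φ : ℂ → ℂ, (∀ w : ℂ, 0 < w.im → 0 < (φ w).im) →
        ∀ w : ℂ, 0 < w.im →
          0 < (φ w - Polynomial.aeval w (P (k - 1)) / Polynomial.aeval w (P k)).im) := by
  obtain ⟨n, rfl⟩ : ∃ n, k = n + 1 := ⟨k - 1, by omega⟩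
  rw [Nat.add_sub_cancel]
  have hdeg' : ∀ i, (P i).degree = i := fun i => by
    rw [degree_eq_natDegree (leadingCoeff_ne_zero.mp (hlead i).ne'), hdeg]
  set c := (P (n + 1)).leadingCoeff
  have hPk : P (n + 1) = C c * nodal univ x :=
    eq_C_leadingCoeff_mul_nodal hxinj.injOn (by simp [hdeg']) fun s _ => hroot s
  have hdeg_lt : (P n).degree < Fintype.card (Fin (n + 1)) := by
    rw [hdeg', Fintype.card_fin]
    exact_mod_cast n.lt_succ_self
  have hd : ∀ s, 0 < (P n).eval (x s) * nodalWeight univ x s / c := fun s =>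
    div_pos (eval_mul_nodalWeight_pos hsupp hmom hdeg' horth (hlead n) hxinj hroot s) (hlead _)
  rw [hPk]
  refine ⟨_, hd, fun z hz => aeval_div_aeval_C_mul_nodal hxinj c hdeg_lt hz, fun φ hφ w hw => ?_⟩
  rw [aeval_div_aeval_C_mul_nodal hxinj c hdeg_lt
    (aeval_C_mul_nodal_ne_zero_of_im_ne_zero (hlead _).ne' _ _ hw.ne'), Complex.sub_im]
  have him := im_sum_ofReal_div_sub_ofReal_nonpos univ x (fun s _ => (hd s).le) hw.le
  linarith [hφ w hw]
end

section
/- For any integer u with |u| < n and real x > 0: tanh(x)/sinh(2nx) · cosh(2ux) = (1/(2n)) · Σ_{i=1}^{2n-1} (-1)^{i-1} · sin²(πi/(2n)) / (sinh²x + sin²(πi/(2n))) · cos(πiu/n). -/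
/-!
Put `N = 2n`, `θⱼ = 2πj/N` and `q = e^{-2x}`. The `j`-th summand equals
`-cos(nθⱼ) cos(uθⱼ) (1 - cos θⱼ) / (cosh 2x - cos θⱼ)`, and up to a factor `-1/4` its numerator is
the sum of the second differences of `m ↦ cos(mθⱼ)` around `m = n + u` and `m = n - u`.

Over the `N`-th roots of unity `z`, the sums `∑ z^m (1 - q²)/((1 - qz)(1 - q/z))` equal
`N (q^m + q^{N-m})/(1 - q^N)` for `0 ≤ m ≤ N`: the kernel is `1/(1 - q/z) + qz/(1 - qz)`, and since
`z^N = 1` both geometric series can be cut after `N` terms at the cost of a factor `(1 - q^N)⁻¹`.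
In hyperbolic form, `∑ⱼ cos(mθⱼ)/(cosh 2x - cos θⱼ) = N cosh((N - 2m)x)/(sinh 2x sinh Nx)`, and
the second differences in `m` turn `cosh((N - 2m)x)` into `2 cosh(2ux) (1 - cosh 2x)`, which
gives `tanh x` after division by `sinh 2x`.
-/

open Real Finset

def rationalPoissonKernel {K : Type*} [Field K] (q z : K) : K :=
  (1 - q ^ 2) / ((1 - q * z) * (1 - q * z⁻¹))

theorem rationalPoissonKernel_mul_one_sub_pow {K : Type*} [Field K] {N : ℕ} {q z : K}
    (hz : z ^ N = 1) (hq : q ^ N ≠ 1) :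
    rationalPoissonKernel q z * (1 - q ^ N) =
      ∑ k ∈ range N, ((q * z⁻¹) ^ k + (q * z) ^ (k + 1)) := by
  have hN : N ≠ 0 := by rintro rfl; exact hq (pow_zero q)
  have hz0 : z ≠ 0 := by rintro rfl; simp [zero_pow hN] at hz
  have hz' : z⁻¹ ^ N = 1 := by rw [inv_pow, hz, inv_one]
  have hne {y : K} (hy : y ^ N = 1) : 1 - q * y ≠ 0 := fun h => hq <|
    calc q ^ N = (q * y) ^ N := by rw [mul_pow, hy, mul_one]
      _ = 1 := by rw [← sub_eq_zero.mp h, one_pow]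
  have h₁ := mul_neg_geom_sum (q * z⁻¹) N
  have h₂ := mul_neg_geom_sum (q * z) N
  rw [mul_pow, hz', mul_one] at h₁
  rw [mul_pow, hz, mul_one] at h₂
  simp only [sum_add_distrib, pow_succ, ← sum_mul]
  rw [rationalPoissonKernel, div_mul_eq_mul_div, div_eq_iff (mul_ne_zero (hne hz) (hne hz'))]
  linear_combination -(1 - q * z) * h₁ - (q * z) * (1 - q * z⁻¹) * h₂
    + (1 - q ^ N) * q ^ 2 * mul_inv_cancel₀ hz0

theorem rationalPoissonKernel_exp_mul_I (q θ : ℝ) :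
    rationalPoissonKernel (q : ℂ) (Complex.exp (θ * Complex.I)) =
      ((1 - q ^ 2) / (1 - 2 * q * cos θ + q ^ 2) : ℝ) := by
  have hcos := Complex.two_cos (θ : ℂ)
  have hmul : Complex.exp (θ * Complex.I) * Complex.exp (-(θ * Complex.I)) = 1 := by
    rw [← Complex.exp_add, add_neg_cancel, Complex.exp_zero]
  rw [neg_mul] at hcos
  rw [rationalPoissonKernel, ← Complex.exp_neg]
  push_cast
  congr 1
  linear_combination (q : ℂ) * hcos + (q : ℂ) ^ 2 * hmul

namespace IsPrimitiveRoot

variable {K : Type*} [Field K] {N : ℕ} {ζ : K}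

theorem sum_pow_pow (hζ : IsPrimitiveRoot ζ N) (a : ℕ) :
    ∑ j ∈ range N, (ζ ^ j) ^ a = if N ∣ a then (N : K) else 0 := by
  simp_rw [pow_right_comm ζ _ a]
  split_ifs with h
  · simp [(hζ.pow_eq_one_iff_dvd a).2 h]
  · rw [geom_sum_eq (mt (hζ.pow_eq_one_iff_dvd a).1 h), pow_right_comm, hζ.pow_eq_one,
      one_pow, sub_self, zero_div]

theorem sum_pow_mul_rationalPoissonKernel_of_lt (hζ : IsPrimitiveRoot ζ N) {q : K} (hq : q ^ N ≠ 1)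
    {m : ℕ} (hm : m < N) :
    ∑ j ∈ range N, (ζ ^ j) ^ m * rationalPoissonKernel q (ζ ^ j) =
      N * (q ^ m + q ^ (N - m)) / (1 - q ^ N) := by
  have hN : N ≠ 0 := by omega
  -- `m + N - k` stands for `m - k` modulo `N`, which keeps all exponents natural.
  have hexpand (j : ℕ) : (ζ ^ j) ^ m * rationalPoissonKernel q (ζ ^ j) * (1 - q ^ N) =
      ∑ k ∈ range N, (q ^ k * (ζ ^ j) ^ (m + N - k) + q ^ (k + 1) * (ζ ^ j) ^ (m + k + 1)) := by
    have hz : (ζ ^ j) ^ N = 1 := by rw [pow_right_comm, hζ.pow_eq_one, one_pow]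
    have hz0 : ζ ^ j ≠ 0 := pow_ne_zero _ (hζ.ne_zero hN)
    rw [mul_assoc, rationalPoissonKernel_mul_one_sub_pow hz hq, mul_sum]
    refine sum_congr rfl fun k hk => ?_
    generalize ζ ^ j = z at hz hz0 ⊢
    have hshift : z ^ m * (z ^ k)⁻¹ = z ^ (m + N - k) := by
      rw [eq_comm, eq_mul_inv_iff_mul_eq₀ (pow_ne_zero _ hz0), ← pow_add,
        Nat.sub_add_cancel (by simp at hk; omega), pow_add, hz, mul_one]
    rw [← hshift, mul_pow, mul_pow, inv_pow]
    ring
  rw [eq_div_iff (sub_ne_zero.mpr (Ne.symm hq)), sum_mul]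
  simp_rw [hexpand]
  rw [sum_comm]
  simp_rw [sum_add_distrib, ← mul_sum, hζ.sum_pow_pow]
  rw [sum_eq_single_of_mem m (mem_range.2 hm), sum_eq_single_of_mem (N - 1 - m) (by simp; omega)]
  · rw [if_pos ⟨1, by omega⟩, if_pos ⟨1, by omega⟩, show N - 1 - m + 1 = N - m by omega]
    ring
  all_goals
    intro k hk hne
    rw [mem_range] at hk
    rw [if_neg, mul_zero]
    intro hdvd
    have := Nat.eq_of_dvd_of_lt_two_mul (by omega) hdvd (by omega)
    omega

theorem sum_pow_mul_rationalPoissonKernel (hζ : IsPrimitiveRoot ζ N) {q : K} (hq : q ^ N ≠ 1)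
    {m : ℕ} (hm : m ≤ N) :
    ∑ j ∈ range N, (ζ ^ j) ^ m * rationalPoissonKernel q (ζ ^ j) =
      N * (q ^ m + q ^ (N - m)) / (1 - q ^ N) := by
  have hN : 0 < N := Nat.pos_of_ne_zero (by rintro rfl; exact hq (pow_zero q))
  obtain hm | rfl := hm.lt_or_eq
  · exact hζ.sum_pow_mul_rationalPoissonKernel_of_lt hq hm
  · have h := hζ.sum_pow_mul_rationalPoissonKernel_of_lt hq hN
    simp_rw [pow_right_comm ζ _ m, hζ.pow_eq_one, one_pow, pow_zero, Nat.sub_self, Nat.sub_zero,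
      pow_zero] at h ⊢
    rw [h, add_comm]

end IsPrimitiveRoot

theorem sum_cos_mul_poisson {N m : ℕ} (hm : m ≤ N) {q : ℝ} (hq : q ^ N ≠ 1) :
    ∑ j ∈ range N, cos (m * (2 * π * j / N)) *
        ((1 - q ^ 2) / (1 - 2 * q * cos (2 * π * j / N) + q ^ 2)) =
      N * (q ^ m + q ^ (N - m)) / (1 - q ^ N) := by
  have hN : N ≠ 0 := by rintro rfl; exact hq (pow_zero q)
  have h := (Complex.isPrimitiveRoot_exp N hN).sum_pow_mul_rationalPoissonKernel
    (q := q) (by exact_mod_cast hq) hm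
  have hroot (j : ℕ) : Complex.exp (2 * π * Complex.I / N) ^ j =
      Complex.exp ((2 * π * j / N : ℝ) * Complex.I) := by
    rw [← Complex.exp_nat_mul]; push_cast; ring_nf
  have hrhs : (N : ℂ) * ((q : ℂ) ^ m + (q : ℂ) ^ (N - m)) / (1 - (q : ℂ) ^ N) =
      ((N * (q ^ m + q ^ (N - m)) / (1 - q ^ N) : ℝ) : ℂ) := by push_cast; ring
  simp_rw [hroot, rationalPoissonKernel_exp_mul_I, ← Complex.exp_nat_mul, ← mul_assoc,
    ← Complex.ofReal_natCast, ← Complex.ofReal_mul, Complex.ofReal_natCast, hrhs] at h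
  simpa only [Complex.re_sum, Complex.re_mul_ofReal, Complex.exp_ofReal_mul_I_re,
    Complex.ofReal_re] using congrArg Complex.re h

theorem sum_cos_div_cosh_sub_cos {N m : ℕ} (hm : m ≤ N) {x : ℝ} (hx : x ≠ 0) :
    ∑ j ∈ range N, cos (m * (2 * π * j / N)) / (cosh (2 * x) - cos (2 * π * j / N)) =
      N * cosh ((N - 2 * m) * x) / (sinh (2 * x) * sinh (N * x)) := by
  obtain rfl | hN := N.eq_zero_or_pos
  · simp
  set q := exp (-2 * x) with hq_def
  have hq0 : 0 < q := exp_pos _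
  have hpow (k : ℕ) : q ^ k = exp (k * (-2 * x)) := by rw [exp_nat_mul]
  have hqN : q ^ N ≠ 1 := by
    rw [hpow, Ne, exp_eq_one_iff]
    simp [hN.ne', hx]
  have hq1 : 1 - q ^ 2 ≠ 0 := by
    rw [hpow, sub_ne_zero, ne_comm, Ne, exp_eq_one_iff]; simp [hx]
  have hcosh2 : cosh (2 * x) = (q⁻¹ + q) / 2 := by
    rw [cosh_eq, hq_def, ← exp_neg]; ring_nf
  have hsinh2 : sinh (2 * x) = (q⁻¹ - q) / 2 := by
    rw [sinh_eq, hq_def, ← exp_neg]; ring_nf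
  have hsinhN : sinh (N * x) = (exp (N * x) - exp (N * x) * q ^ N) / 2 := by
    rw [sinh_eq, hpow, ← exp_add]; ring_nf
  have hcoshN :
      cosh ((N - 2 * m) * x) = (exp (N * x) * q ^ m + exp (N * x) * q ^ (N - m)) / 2 := by
    rw [cosh_eq, hpow, hpow, ← exp_add, ← exp_add, Nat.cast_sub hm]; ring_nf
  have hterm (θ c : ℝ) : c / (cosh (2 * x) - cos θ) =
      2 * q / (1 - q ^ 2) * (c * ((1 - q ^ 2) / (1 - 2 * q * cos θ + q ^ 2))) := by
    have hD : cosh (2 * x) - cos θ ≠ 0 := by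
      have := one_lt_cosh.mpr (mul_ne_zero two_ne_zero hx)
      linarith [cos_le_one θ]
    rw [hcosh2] at hD ⊢
    field_simp
    ring
  simp_rw [hterm, ← mul_sum, sum_cos_mul_poisson hm hqN, hcoshN, hsinh2, hsinhN]
  have hqN1 : 1 - q ^ N ≠ 0 := sub_ne_zero.mpr (Ne.symm hqN)
  field_simp

theorem sum_second_diff_cos_div_cosh_sub_cos {N a : ℕ} (ha : a + 2 ≤ N) {x : ℝ} (hx : x ≠ 0) :
    ∑ j ∈ range N, (2 * cos ((a + 1) * (2 * π * j / N)) - cos (a * (2 * π * j / N))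
        - cos ((a + 2) * (2 * π * j / N))) / (cosh (2 * x) - cos (2 * π * j / N)) =
      2 * N * cosh ((N - 2 * (a + 1)) * x) * (1 - cosh (2 * x)) /
        (sinh (2 * x) * sinh (N * x)) := by
  have h₀ := sum_cos_div_cosh_sub_cos (N := N) (m := a) (by omega) hx
  have h₁ := sum_cos_div_cosh_sub_cos (N := N) (m := a + 1) (by omega) hx
  have h₂ := sum_cos_div_cosh_sub_cos (N := N) (m := a + 2) ha hx
  push_cast at h₁ h₂
  simp only [sub_div, sum_sub_distrib, mul_div_assoc (2 : ℝ), ← mul_sum, h₀, h₁, h₂]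
  set y := ((N : ℝ) - 2 * (a + 1)) * x
  rw [show ((N : ℝ) - 2 * a) * x = y + 2 * x by ring,
    show ((N : ℝ) - 2 * (a + 2)) * x = y - 2 * x by ring, cosh_add, cosh_sub]
  ring

theorem cos_mul_cos_mul_one_sub_cos {a b p r : ℝ} (hp : a + b = p + 1) (hr : a - b = r + 1)
    (θ : ℝ) : cos (a * θ) * cos (b * θ) * (1 - cos θ) =
      ((2 * cos ((p + 1) * θ) - cos (p * θ) - cos ((p + 2) * θ)) +
        (2 * cos ((r + 1) * θ) - cos (r * θ) - cos ((r + 2) * θ))) / 4 := by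
  rw [show (p + 1) * θ = a * θ + b * θ by rw [← hp]; ring,
    show p * θ = a * θ + b * θ - θ by linear_combination -θ * hp,
    show (p + 2) * θ = a * θ + b * θ + θ by linear_combination -θ * hp,
    show (r + 1) * θ = a * θ - b * θ by rw [← hr]; ring,
    show r * θ = a * θ - b * θ - θ by linear_combination -θ * hr,
    show (r + 2) * θ = a * θ - b * θ + θ by linear_combination -θ * hr]
  simp only [cos_add, cos_sub, sin_add, sin_sub]
  ring

theorem neg_one_pow_mul_sin_sq_div_eq {n : ℕ} (hn : n ≠ 0) (i : ℕ) (u : ℤ) (x : ℝ) :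
    (-1 : ℝ) ^ (i - 1) * sin (π * i / (2 * n)) ^ 2 / (sinh x ^ 2 + sin (π * i / (2 * n)) ^ 2) *
        cos (π * i * u / n) =
      -(cos (n * (2 * π * i / (2 * n))) * cos (u * (2 * π * i / (2 * n))) *
        (1 - cos (2 * π * i / (2 * n)))) / (cosh (2 * x) - cos (2 * π * i / (2 * n))) := by
  set θ := 2 * π * i / (2 * n) with hθ
  have hsin : sin (π * i / (2 * n)) ^ 2 = (1 - cos θ) / 2 := by
    have := cos_sq (π * i / (2 * n))
    rw [show 2 * (π * i / (2 * n)) = θ by ring] at this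
    linarith [sin_sq_add_cos_sq (π * i / (2 * n))]
  have hsinh : sinh x ^ 2 = (cosh (2 * x) - 1) / 2 := by
    linarith [cosh_two_mul x, cosh_sq x]
  have hcos : cos (π * i * u / n) = cos (u * θ) := by congr 1; rw [hθ]; field_simp
  have hsign : (-1 : ℝ) ^ (i - 1) * (1 - cos θ) = -cos (n * θ) * (1 - cos θ) := by
    rw [show (n : ℝ) * θ = i * π by rw [hθ]; field_simp, cos_nat_mul_pi]
    rcases i with _ | i
    · simp [θ]
    · rw [pow_succ, Nat.add_sub_cancel]; ring
  rw [hsin, hsinh, hcos,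
    show (cosh (2 * x) - 1) / 2 + (1 - cos θ) / 2 = (cosh (2 * x) - cos θ) / 2 by ring,
    mul_div_assoc, div_div_div_cancel_right₀ two_ne_zero, ← mul_div_assoc, hsign]
  ring

theorem neg_one_pow_mul_sin_sq_div_eq_second_diff {n p r : ℕ} {u : ℤ}
    (hp : (n : ℤ) + u = p + 1) (hr : (n : ℤ) - u = r + 1) (i : ℕ) (x : ℝ) :
    (-1 : ℝ) ^ (i - 1) * sin (π * i / (2 * n)) ^ 2 / (sinh x ^ 2 + sin (π * i / (2 * n)) ^ 2) *
        cos (π * i * u / n) =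
      -((2 * cos ((p + 1) * (2 * π * i / (2 * n))) - cos (p * (2 * π * i / (2 * n)))
            - cos ((p + 2) * (2 * π * i / (2 * n)))) / (cosh (2 * x) - cos (2 * π * i / (2 * n)))
        + (2 * cos ((r + 1) * (2 * π * i / (2 * n))) - cos (r * (2 * π * i / (2 * n)))
            - cos ((r + 2) * (2 * π * i / (2 * n)))) / (cosh (2 * x) - cos (2 * π * i / (2 * n))))
        / 4 := by
  rw [neg_one_pow_mul_sin_sq_div_eq (by omega),
    cos_mul_cos_mul_one_sub_cos (p := p) (r := r) (by exact_mod_cast hp) (by exact_mod_cast hr)]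
  ring

theorem stmt_15_general (n : ℕ) (u : ℤ) (hu : |u| < (n : ℤ)) (x : ℝ) (hx : 0 < x) :
    Real.tanh x / Real.sinh (2 * n * x) * Real.cosh (2 * u * x)
      = (1 / (2 * n)) * ∑ i ∈ Finset.Icc 1 (2 * n - 1),
          (-1 : ℝ) ^ (i - 1) * Real.sin (Real.pi * i / (2 * n)) ^ 2 /
            (Real.sinh x ^ 2 + Real.sin (Real.pi * i / (2 * n)) ^ 2) *
            Real.cos (Real.pi * i * u / n) := by
  obtain ⟨hu₁, hu₂⟩ := abs_lt.mp hu
  obtain ⟨p, hp⟩ : ∃ p : ℕ, (n : ℤ) + u = p + 1 := ⟨(n + u - 1).toNat, by omega⟩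
  obtain ⟨r, hr⟩ : ∃ r : ℕ, (n : ℤ) - u = r + 1 := ⟨(n - u - 1).toNat, by omega⟩
  have hn : n ≠ 0 := by omega
  have hP := sum_second_diff_cos_div_cosh_sub_cos (N := 2 * n) (a := p) (by omega) hx.ne'
  have hR := sum_second_diff_cos_div_cosh_sub_cos (N := 2 * n) (a := r) (by omega) hx.ne'
  push_cast at hP hR
  rw [sum_subset (s₂ := range (2 * n)) (fun i hi => by simp at hi ⊢; omega) fun i hi hi' => by
      obtain rfl : i = 0 := by simp at hi hi'; omega
      simp]
  rw [sum_congr rfl fun i _ => neg_one_pow_mul_sin_sq_div_eq_second_diff hp hr i x, ← sum_div,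
    sum_neg_distrib, sum_add_distrib, hP, hR]
  have hp' : (2 * (n : ℝ) - 2 * (p + 1)) * x = -(2 * u * x) := by
    linear_combination 2 * x * (by exact_mod_cast hp : (n : ℝ) + u = p + 1)
  have hr' : (2 * (n : ℝ) - 2 * (r + 1)) * x = 2 * u * x := by
    linear_combination 2 * x * (by exact_mod_cast hr : (n : ℝ) - u = r + 1)
  have hsinhN : sinh (2 * n * x) ≠ 0 := sinh_ne_zero.mpr (by positivity)
  rw [hp', hr', cosh_neg, tanh_eq_sinh_div_cosh, cosh_two_mul, sinh_two_mul]
  field_simp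
  linear_combination -2 * cosh_sq x

/-- For integers `|u| < n` and real `x > 0`:
`tanh x/sinh(2nx)·cosh(2ux) = (1/(2n)) Σ_{i=1}^{2n-1} (-1)^{i-1} sin²(πi/(2n))/(sinh²x + sin²(πi/(2n)))·cos(πiu/n)`. -/
theorem stmt_15 (n : ℕ) (hn : 0 < n) (u : ℤ) (hu : |u| < (n : ℤ)) (x : ℝ) (hx : 0 < x) :
    Real.tanh x / Real.sinh (2 * n * x) * Real.cosh (2 * u * x)
      = (1 / (2 * n)) * ∑ i ∈ Finset.Icc 1 (2 * n - 1),
          (-1 : ℝ) ^ (i - 1) * Real.sin (Real.pi * i / (2 * n)) ^ 2 /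
            (Real.sinh x ^ 2 + Real.sin (Real.pi * i / (2 * n)) ^ 2) *
            Real.cos (Real.pi * i * u / n) :=
  stmt_15_general n u hu x hx
end

section
/- For any odd positive integer m and real x > 0: Σ_{j=1}^{(m-1)/2} sinh²x / (sin²(πj/m) + sinh²x) = (m/2)·tanh(x)/tanh(mx) - 1/2. -/
/-!
Put `r = e^{2x}`. Each summand equals `tanh x · Re ((r + w) / (r - w))` with `w = e^{2πij/m}`,
a value of the Poisson kernel. Writing `(r + w) / (r - w) = 2r / (r - w) - 1`, the sum over all
`m`-th roots of unity `w` is read off from the logarithmic derivative of `X^m - 1`, and equals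
`m (r^m + 1) / (r^m - 1) = m coth (m x)`. For odd `m` the summands for `j` and `m - j` agree and the
one for `j = 0` is `1`, so the sum over `1 ≤ j ≤ (m - 1) / 2` is `(m tanh x coth (m x) - 1) / 2`.
-/

open Real Finset

theorem Finset.sum_range_two_mul_add_one_of_symm {M : Type*} [AddCommMonoid M] (f : ℕ → M)
    (n : ℕ) (hf : ∀ j ∈ Icc 1 n, f (2 * n + 1 - j) = f j) :
    ∑ j ∈ range (2 * n + 1), f j = f 0 + 2 • ∑ j ∈ Icc 1 n, f j := by
  have hIcc : ∀ g : ℕ → M, ∑ j ∈ Icc 1 n, g j = ∑ j ∈ range n, g (j + 1) := fun g ↦ by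
    rw [← Ico_add_one_right_eq_Icc, sum_Ico_eq_sum_range, Nat.add_sub_cancel]
    exact sum_congr rfl fun j _ ↦ by rw [add_comm]
  have hupper : ∑ j ∈ range n, f (n + j + 1) = ∑ j ∈ Icc 1 n, f j := by
    rw [← sum_range_reflect, ← sum_congr rfl hf, hIcc]
    exact sum_congr rfl fun j hj ↦ by have := mem_range.mp hj; congr 1; omega
  rw [sum_range_succ', two_mul, sum_range_add, hupper, ← hIcc, two_nsmul, add_comm]

namespace IsPrimitiveRoot

open Polynomial

variable {K : Type*} [Field K] {ζ : K} {m : ℕ} {z : K}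

theorem sum_one_div_sub_pow (hζ : IsPrimitiveRoot ζ m) (hz : z ^ m ≠ 1) :
    ∑ j ∈ range m, 1 / (z - ζ ^ j) = m * z ^ (m - 1) / (z ^ m - 1) := by
  have hroots : (X ^ m - C (1 : K)).roots = (range m).val.map (ζ ^ ·) := by
    rw [← nthRoots, hζ.nthRoots_eq (one_pow m)]
    simp
  have heval : eval z (X ^ m - C (1 : K)) ≠ 0 := by simpa [sub_eq_zero] using hz
  have hlogDeriv := (X_pow_sub_one_splits hζ).eval_derivative_div_eval_of_ne_zero heval
  rw [hroots, Multiset.map_map] at hlogDeriv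
  rw [sum_eq_multiset_sum]
  simpa [derivative_X_pow] using hlogDeriv.symm

theorem sum_add_div_sub_pow (hζ : IsPrimitiveRoot ζ m) (hz : z ^ m ≠ 1) :
    ∑ j ∈ range m, (z + ζ ^ j) / (z - ζ ^ j) = m * (z ^ m + 1) / (z ^ m - 1) := by
  have hm : m ≠ 0 := by rintro rfl; simp at hz
  have hsub : ∀ j, z - ζ ^ j ≠ 0 := fun j h ↦ hz <| by
    rw [sub_eq_zero.mp h, ← pow_mul, mul_comm, pow_mul, hζ.pow_eq_one, one_pow]
  have hsplit : ∀ j, (z + ζ ^ j) / (z - ζ ^ j) = 2 * z * (1 / (z - ζ ^ j)) - 1 := fun j ↦ by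
    field_simp [hsub j]
    ring
  have hzm : z * z ^ (m - 1) = z ^ m := by
    rw [← pow_succ', Nat.sub_add_cancel (Nat.pos_of_ne_zero hm)]
  simp only [hsplit, sum_sub_distrib, ← mul_sum, hζ.sum_one_div_sub_pow hz, sum_const,
    card_range, nsmul_eq_mul, mul_one]
  field_simp [sub_ne_zero.mpr hz]
  linear_combination (2 * m) * hzm

end IsPrimitiveRoot

theorem Complex.re_add_exp_div_sub_exp (r φ : ℝ) :
    ((r + Complex.exp (φ * Complex.I)) / (r - Complex.exp (φ * Complex.I))).re
      = (r ^ 2 - 1) / (r ^ 2 - 2 * r * Real.cos φ + 1) := by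
  rw [Complex.div_re, ← add_div, Complex.normSq_apply]
  simp only [Complex.add_re, Complex.sub_re, Complex.add_im, Complex.sub_im, Complex.ofReal_re,
    Complex.ofReal_im, Complex.exp_ofReal_mul_I_re, Complex.exp_ofReal_mul_I_im]
  congr 1
  · linear_combination -Real.sin_sq_add_cos_sq φ
  · linear_combination Real.sin_sq_add_cos_sq φ

theorem sum_range_div_sq_sub_two_mul_cos_add_one {m : ℕ} {r : ℝ} (hr : r ^ m ≠ 1) :
    ∑ j ∈ range m, (r ^ 2 - 1) / (r ^ 2 - 2 * r * cos (2 * π * j / m) + 1)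
      = m * (r ^ m + 1) / (r ^ m - 1) := by
  have hm : m ≠ 0 := by rintro rfl; simp at hr
  have hpow : ∀ j : ℕ, Complex.exp (2 * π * Complex.I / m) ^ j
      = Complex.exp ((2 * π * j / m : ℝ) * Complex.I) := fun j ↦ by
    rw [← Complex.exp_nat_mul]
    push_cast
    ring_nf
  have hrC : (r : ℂ) ^ m ≠ 1 := by exact_mod_cast hr
  simp_rw [← Complex.re_add_exp_div_sub_exp, ← hpow, ← Complex.re_sum,
    (Complex.isPrimitiveRoot_exp m hm).sum_add_div_sub_pow hrC]
  norm_cast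

theorem Real.tanh_eq_exp_two_mul (x : ℝ) :
    tanh x = (exp (2 * x) - 1) / (exp (2 * x) + 1) := by
  rw [tanh_eq, two_mul, exp_add, exp_neg]
  field_simp

theorem Real.sinh_sq_div_sin_sq_add_sinh_sq (x θ : ℝ) :
    sinh x ^ 2 / (sin θ ^ 2 + sinh x ^ 2)
      = tanh x * ((exp (2 * x) ^ 2 - 1) /
          (exp (2 * x) ^ 2 - 2 * exp (2 * x) * cos (2 * θ) + 1)) := by
  have hr : 0 < exp (2 * x) := exp_pos _
  have hsinh : sinh x ^ 2 = (exp (2 * x) - 1) ^ 2 / (4 * exp (2 * x)) := by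
    rw [sinh_eq, two_mul, exp_add, exp_neg]
    field_simp
    ring
  rw [tanh_eq_exp_two_mul, hsinh, cos_two_mul, cos_sq']
  set r := exp (2 * x)
  by_cases hD : (r - 1) ^ 2 + 4 * r * sin θ ^ 2 = 0
  · have hr1 : r = 1 := by nlinarith [sq_nonneg (r - 1), sq_nonneg (sin θ)]
    simp [hr1]
  · field_simp
    ring

theorem stmt_16_general (m : ℕ) (hm : Odd m) (x : ℝ) (hx : 0 < x) :
    ∑ j ∈ Finset.Icc 1 ((m - 1) / 2),
        Real.sinh x ^ 2 / (Real.sin (Real.pi * j / m) ^ 2 + Real.sinh x ^ 2)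
      = (m / 2 : ℝ) * Real.tanh x / Real.tanh (m * x) - 1 / 2 := by
  set f : ℕ → ℝ := fun j ↦ sinh x ^ 2 / (sin (π * j / m) ^ 2 + sinh x ^ 2)
  have hr : exp (2 * x) ^ m ≠ 1 :=
    (one_lt_pow₀ (one_lt_exp_iff.mpr (by linarith)) hm.pos.ne').ne'
  have hfull : ∑ j ∈ range m, f j = m * tanh x / tanh (m * x) := calc
    _ = ∑ j ∈ range m, tanh x * ((exp (2 * x) ^ 2 - 1) /
          (exp (2 * x) ^ 2 - 2 * exp (2 * x) * cos (2 * π * j / m) + 1)) :=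
        sum_congr rfl fun j _ ↦ by simp only [f, sinh_sq_div_sin_sq_add_sinh_sq]; ring_nf
    _ = tanh x * (m * (exp (2 * x) ^ m + 1) / (exp (2 * x) ^ m - 1)) := by
        rw [← mul_sum, sum_range_div_sq_sub_two_mul_cos_add_one hr]
    _ = m * tanh x / tanh (m * x) := by
        rw [tanh_eq_exp_two_mul (m * x), mul_left_comm, exp_nat_mul]
        field_simp [sub_ne_zero.mpr hr]
  obtain ⟨n, rfl⟩ := hm
  have hsymm : ∀ j ∈ Icc 1 n, f (2 * n + 1 - j) = f j := fun j hj ↦ by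
    have hjn := (mem_Icc.mp hj).2
    simp only [f, Nat.cast_sub (by omega : j ≤ 2 * n + 1)]
    rw [mul_sub, sub_div, mul_div_cancel_right₀ _ (by positivity), sin_pi_sub]
  have hf0 : f 0 = 1 := by simp [f, (sinh_pos_iff.mpr hx).ne']
  rw [sum_range_two_mul_add_one_of_symm f n hsymm, hf0, nsmul_eq_mul, Nat.cast_ofNat] at hfull
  rw [show (2 * n + 1 - 1) / 2 = n by omega]
  linear_combination hfull / 2

/-- For odd positive `m` and `x > 0`:
`Σ_{j=1}^{(m-1)/2} sinh²x/(sin²(πj/m)+sinh²x) = (m/2)·tanh x/tanh(mx) - 1/2`. -/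
theorem stmt_16 (m : ℕ) (hm : Odd m) (hm' : 0 < m) (x : ℝ) (hx : 0 < x) :
    ∑ j ∈ Finset.Icc 1 ((m - 1) / 2),
        Real.sinh x ^ 2 / (Real.sin (Real.pi * j / m) ^ 2 + Real.sinh x ^ 2)
      = (m / 2 : ℝ) * Real.tanh x / Real.tanh (m * x) - 1 / 2 :=
  stmt_16_general m hm x hx
end

section
/- For every positive integer k and every complex z with (1-z²)·U_{k-1}(z) ≠ 0: 1/((1-z²)·U_{k-1}(z)) = (1/(2k))·Σ_{j=1}^{2k} (-1)^{j-1} / (z - cos(πj/k)), where U_{k-1} is the Chebyshev polynomial of the second kind. -/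
/-!
Write `2z = x + y` with `x y = 1`, and `2 cos (π j / k) = ζ + ζ⁻¹` with `ζ = ω ^ j` for a primitive
`2k`-th root of unity `ω`. Then `4 (1 - z²) U_{k-1}(z) = -(x - y)(x ^ k - y ^ k)`, the sign
`(-1) ^ (j - 1)` is `-ζ ^ k`, and each term splits as `2ζ / (x - y) · (1 / (x - ζ) - 1 / (y - ζ))`.
Over the `n`-th roots of unity, `∑ ζ ^ m / (x - ζ) = n x ^ (m - 1) / (x ^ n - 1)` for `1 ≤ m ≤ n`:
expand `1 / (x - ζ)` as a geometric sum and use orthogonality of the characters `ζ ↦ ζ ^ e`.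
-/

open Polynomial Finset

theorem Finset.sum_Icc_one_eq_sum_range_of_apply_eq_apply_zero {M : Type*} [AddCommMonoid M]
    {f : ℕ → M} {n : ℕ} (hf : f n = f 0) : ∑ j ∈ Icc 1 n, f j = ∑ j ∈ range n, f j := by
  rw [← Finset.Ico_add_one_right_eq_Icc, ← zero_add 1, ← sum_Ico_add', ← range_eq_Ico]
  cases n with
  | zero => simp
  | succ m => rw [sum_range_succ, sum_range_succ', hf]

theorem pow_two_mul_ne_one_of_mul_eq_one {R : Type*} [CommRing R] {x y : R} (hxy : x * y = 1)
    {k : ℕ} (hk : x ^ k ≠ y ^ k) : x ^ (2 * k) ≠ 1 := by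
  intro h
  apply hk
  linear_combination y ^ k * h - x ^ k * congrArg (· ^ k) hxy

namespace Polynomial.Chebyshev

variable {R : Type*} [CommRing R] {x y z : R}

theorem U_eval_mul_sub_of_two_mul_eq_add (hxy : x * y = 1) (hz : 2 * z = x + y) :
    ∀ n : ℕ, (U R (n - 1)).eval z * (x - y) = x ^ n - y ^ n
  | 0 => by simp
  | 1 => by simp
  | n + 2 => by
    have h := U_add_one R n
    have h1 := U_eval_mul_sub_of_two_mul_eq_add hxy hz (n + 1)
    have h0 := U_eval_mul_sub_of_two_mul_eq_add hxy hz n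
    push_cast at h h1 h0 ⊢
    rw [show (n : ℤ) + 1 - 1 = n by ring] at h1
    rw [show (n : ℤ) + 2 - 1 = n + 1 by ring, h, eval_sub, eval_mul, eval_mul, eval_X,
      eval_ofNat, sub_mul, mul_assoc, mul_assoc, ← mul_assoc 2 z, h1, h0, hz]
    linear_combination (x ^ n - y ^ n) * hxy

theorem one_sub_sq_mul_U_eval_of_two_mul_eq_add (hxy : x * y = 1) (hz : 2 * z = x + y) (n : ℕ) :
    4 * ((1 - z ^ 2) * (U R (n - 1)).eval z) = -((x - y) * (x ^ n - y ^ n)) := by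
  rw [← U_eval_mul_sub_of_two_mul_eq_add hxy hz n]
  linear_combination -(U R (n - 1)).eval z * ((2 * z + x + y) * hz + 4 * hxy)

end Polynomial.Chebyshev

namespace IsPrimitiveRoot

theorem pow_pow_eq_neg_one_pow {R : Type*} [CommRing R] [NoZeroDivisors R] {ω : R} {k : ℕ}
    (hω : IsPrimitiveRoot ω (2 * k)) (hk : 0 < k) (j : ℕ) : (ω ^ j) ^ k = (-1) ^ j := by
  have h := hω.pow_of_dvd hk.ne' (dvd_mul_left k 2)
  rw [Nat.mul_div_cancel _ hk] at h
  rw [pow_right_comm, h.eq_neg_one_of_two_right]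

theorem sum_range_pow_pow {R : Type*} [CommRing R] [IsDomain R] {ω : R} {n : ℕ}
    (hω : IsPrimitiveRoot ω n) (e : ℕ) :
    ∑ j ∈ range n, (ω ^ j) ^ e = if n ∣ e then (n : R) else 0 := by
  simp_rw [← pow_mul, mul_comm _ e, pow_mul]
  split_ifs with h
  · simp [(hω.pow_eq_one_iff_dvd e).2 h]
  · have hgeom := geom_sum_mul (ω ^ e) n
    rw [pow_right_comm, hω.pow_eq_one, one_pow, sub_self] at hgeom
    exact (mul_eq_zero.1 hgeom).resolve_right (sub_ne_zero.2 (mt (hω.pow_eq_one_iff_dvd e).1 h))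

variable {K : Type*} [Field K] {ω x : K}

theorem sum_range_pow_div_sub {n m : ℕ} (hω : IsPrimitiveRoot ω n) (hx : x ^ n ≠ 1)
    (hm : 1 ≤ m) (hmn : m ≤ n) :
    ∑ j ∈ range n, (ω ^ j) ^ m / (x - ω ^ j) = n * x ^ (m - 1) / (x ^ n - 1) := by
  have hxn : x ^ n - 1 ≠ 0 := sub_ne_zero.2 hx
  have hterm (j : ℕ) : (ω ^ j) ^ m / (x - ω ^ j)
      = (∑ t ∈ range n, x ^ t * (ω ^ j) ^ (m + (n - 1 - t))) / (x ^ n - 1) := by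
    set ζ := ω ^ j
    have hζ : ζ ^ n = 1 := by rw [pow_right_comm, hω.pow_eq_one, one_pow]
    have hsub : x - ζ ≠ 0 := fun h => hx (by rw [sub_eq_zero.1 h, hζ])
    have hgeom := geom_sum₂_mul x ζ n
    rw [hζ] at hgeom
    simp_rw [pow_add, mul_left_comm _ (ζ ^ m), ← mul_sum]
    rw [div_eq_div_iff hsub hxn, ← hgeom]
    ring
  simp_rw [hterm, ← sum_div]
  rw [sum_comm]
  simp_rw [← mul_sum, hω.sum_range_pow_pow]
  rw [sum_eq_single_of_mem (m - 1) (mem_range.2 (by omega)),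
    show m + (n - 1 - (m - 1)) = n by omega, if_pos dvd_rfl, mul_comm]
  intro t ht hne
  rw [mem_range] at ht
  rw [if_neg, mul_zero]
  intro hdvd
  have := Nat.eq_of_dvd_of_lt_two_mul (by omega) hdvd (by omega)
  omega

theorem sum_range_pow_succ_mul_one_div_sub_sub_one_div_sub {k : ℕ} {y : K}
    (hω : IsPrimitiveRoot ω (2 * k)) (hk : 0 < k) (hxy : x * y = 1) (hxk : x ^ k - y ^ k ≠ 0) :
    ∑ j ∈ range (2 * k), (ω ^ j) ^ (k + 1) * (1 / (x - ω ^ j) - 1 / (y - ω ^ j))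
      = 4 * k / (x ^ k - y ^ k) := by
  have hx2k := pow_two_mul_ne_one_of_mul_eq_one hxy (sub_ne_zero.1 hxk)
  have hy2k :=
    pow_two_mul_ne_one_of_mul_eq_one (y := x) (by rwa [mul_comm]) (sub_ne_zero.1 hxk).symm
  simp_rw [mul_sub, mul_one_div]
  rw [sum_sub_distrib, hω.sum_range_pow_div_sub hx2k (by omega) (by omega),
    hω.sum_range_pow_div_sub hy2k (by omega) (by omega), Nat.add_sub_cancel,
    div_sub_div _ _ (sub_ne_zero.2 hx2k) (sub_ne_zero.2 hy2k),
    div_eq_div_iff (mul_ne_zero (sub_ne_zero.2 hx2k) (sub_ne_zero.2 hy2k)) hxk]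
  push_cast
  linear_combination (-2 * k * (x ^ (2 * k) + y ^ (2 * k) - 2)) * congrArg (· ^ k) hxy

end IsPrimitiveRoot

theorem one_div_sub_eq_of_two_mul_eq_add {K : Type*} [Field K] [NeZero (2 : K)]
    {x y z ζ c : K} (hxy : x * y = 1) (hz : 2 * z = x + y) (hζ : ζ ≠ 0) (hc : 2 * c = ζ + ζ⁻¹)
    (hxζ : x - ζ ≠ 0) (hyζ : y - ζ ≠ 0) (hx_sub_y : x - y ≠ 0) :
    1 / (z - c) = 2 * ζ / (x - y) * (1 / (x - ζ) - 1 / (y - ζ)) := by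
  have hfactor : 2 * ζ * (z - c) = -((x - ζ) * (y - ζ)) := by
    linear_combination ζ * hz - ζ * hc + hxy - mul_inv_cancel₀ hζ
  have hzc : z - c ≠ 0 := by
    intro h
    rw [h, mul_zero, eq_comm, neg_eq_zero] at hfactor
    exact mul_ne_zero hxζ hyζ hfactor
  field_simp
  linear_combination (x - y) * hfactor

theorem neg_one_pow_pred_div_sub_eq {K : Type*} [Field K] [NeZero (2 : K)] {ω x y z c : K}
    {k j : ℕ} (hω : IsPrimitiveRoot ω (2 * k)) (hk : 0 < k) (hj : 1 ≤ j) (hxy : x * y = 1)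
    (hxk : x ^ k - y ^ k ≠ 0) (hz : 2 * z = x + y) (hc : 2 * c = ω ^ j + (ω ^ j)⁻¹) :
    (-1) ^ (j - 1) / (z - c)
      = -(2 / (x - y)) * ((ω ^ j) ^ (k + 1) * (1 / (x - ω ^ j) - 1 / (y - ω ^ j))) := by
  have hζ : (ω ^ j) ^ (2 * k) = 1 := by rw [pow_right_comm, hω.pow_eq_one, one_pow]
  have hx2k := pow_two_mul_ne_one_of_mul_eq_one hxy (sub_ne_zero.1 hxk)
  have hy2k :=
    pow_two_mul_ne_one_of_mul_eq_one (y := x) (by rwa [mul_comm]) (sub_ne_zero.1 hxk).symm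
  have hxζ : x - ω ^ j ≠ 0 := fun h => hx2k (by rw [sub_eq_zero.1 h, hζ])
  have hyζ : y - ω ^ j ≠ 0 := fun h => hy2k (by rw [sub_eq_zero.1 h, hζ])
  have hx_sub_y : x - y ≠ 0 := fun h => hxk (by rw [sub_eq_zero.1 h, sub_self])
  have hsign : (-1 : K) ^ (j - 1) = -(ω ^ j) ^ k := by
    obtain ⟨i, rfl⟩ := Nat.exists_eq_add_of_le' hj
    rw [hω.pow_pow_eq_neg_one_pow hk, pow_succ, Nat.add_sub_cancel]
    ring
  have hω0 : ω ^ j ≠ 0 := pow_ne_zero j (hω.ne_zero (by omega))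
  rw [div_eq_mul_one_div, one_div_sub_eq_of_two_mul_eq_add hxy hz hω0 hc hxζ hyζ hx_sub_y, hsign]
  ring

theorem Complex.exists_mul_eq_one_two_mul_eq_add (z : ℂ) :
    ∃ x y : ℂ, x * y = 1 ∧ 2 * z = x + y := by
  obtain ⟨θ, rfl⟩ := Complex.cos_surjective z
  refine ⟨_, _, ?_, Complex.two_cos θ⟩
  rw [← Complex.exp_add, neg_mul, add_neg_cancel, Complex.exp_zero]

theorem Complex.two_mul_cos_pi_mul_div_eq_add_inv (k j : ℕ) :
    2 * (Real.cos (Real.pi * j / k) : ℂ)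
      = Complex.exp (2 * Real.pi * Complex.I / (2 * k : ℕ)) ^ j
        + (Complex.exp (2 * Real.pi * Complex.I / (2 * k : ℕ)) ^ j)⁻¹ := by
  rw [← Complex.exp_nat_mul, ← Complex.exp_neg, Complex.ofReal_cos, Complex.two_cos]
  congr 2 <;> push_cast <;> field_simp

/-- Partial fraction expansion of the reciprocal of `(1-z²)U_{k-1}(z)`:
`1/((1-z²)U_{k-1}(z)) = (1/(2k)) Σ_{j=1}^{2k} (-1)^{j-1}/(z - cos(πj/k))`. -/
theorem stmt_19 (k : ℕ) (hk : 0 < k) (z : ℂ)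
    (hz : (1 - z ^ 2) * (Polynomial.Chebyshev.U ℂ (k - 1)).eval z ≠ 0) :
    1 / ((1 - z ^ 2) * (Polynomial.Chebyshev.U ℂ (k - 1)).eval z)
      = (1 / (2 * k : ℂ)) * ∑ j ∈ Finset.Icc 1 (2 * k),
          (-1 : ℂ) ^ (j - 1) / (z - (Real.cos (Real.pi * j / k) : ℂ)) := by
  obtain ⟨x, y, hxy, hzx⟩ := Complex.exists_mul_eq_one_two_mul_eq_add z
  have hden := Chebyshev.one_sub_sq_mul_U_eval_of_two_mul_eq_add hxy hzx k
  obtain ⟨hx_sub_y, hxk⟩ : x - y ≠ 0 ∧ x ^ k - y ^ k ≠ 0 := by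
    rw [← mul_ne_zero_iff, ← neg_ne_zero, ← hden]
    exact mul_ne_zero (by norm_num) hz
  have hω := Complex.isPrimitiveRoot_exp (2 * k) (by omega)
  rw [sum_congr rfl fun j hj => neg_one_pow_pred_div_sub_eq hω hk (mem_Icc.1 hj).1 hxy hxk hzx
      (Complex.two_mul_cos_pi_mul_div_eq_add_inv k j),
    sum_Icc_one_eq_sum_range_of_apply_eq_apply_zero (by simp only [hω.pow_eq_one, pow_zero]),
    ← mul_sum, hω.sum_range_pow_succ_mul_one_div_sub_sub_one_div_sub hk hxy hxk, div_eq_iff hz]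
  have hk0 : (k : ℂ) ≠ 0 := by exact_mod_cast hk.ne'
  field_simp
  linear_combination hden
end
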